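/- arXiv:2304.00094 — 3 statements merged into one kernel-verified Lean document; each statement's English description precedes it below -/
import Mathlib

section
/- Let d ≥ 1 and M > 0 a real number, and let a, b ∈ ℝ^d. Define the equispaced points y_ℓ := (ℓ_1/M, …, ℓ_d/M) for ℓ ∈ ℤ^d. Then the series ∑_{ℓ∈ℤ^d} sinc(Mπ(a − y_ℓ)) · sinc(Mπ(b − y_ℓ)) converges absolutely and equals sinc(Mπ(a − b)), where sinc of a vector is the product of the one-dimensional sinc functions of its components. -/
noncomputable section
open scoped Real BigOperators

/-- The one-dimensional `sinc` function: `sin x / x` for `x ≠ 0` and `1` at `0`. -/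
def sinc (x : ℝ) : ℝ := if x = 0 then 1 else Real.sin x / x

/-- The `d`-variate `sinc` function, the product of the componentwise `sinc`s. -/
def dsinc {d : ℕ} (x : Fin d → ℝ) : ℝ := ∏ t, sinc (x t)

/-!
On the circle `ℝ/ℤ`, let `e_x` be the function `t ↦ exp (2πixt)` on `(-1/2, 1/2]`. Its `n`-th
Fourier coefficient is `∫_{-1/2}^{1/2} exp (2πi(x - n)t) dt = sinc (π(x - n))`, and
`⟪e_y, e_x⟫ = sinc (π(x - y))`, so Parseval's identity `⟪e_y, e_x⟫ = ∑ₙ conj ê_y(n) ê_x(n)` is the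
one-dimensional identity `∑ₙ sinc (π(x - n)) sinc (π(y - n)) = sinc (π(x - y))`. The substitution
`x = M a`, `y = M b` turns the points `n / M` into integers, and since a real series that converges
converges absolutely, the `d`-dimensional series is the product of the one-dimensional ones.
-/

open Complex MeasureTheory ComplexConjugate

theorem sinc_eq_real_sinc : sinc = Real.sinc := rfl

theorem hasSum_pi_prod {β : Type*} {d : ℕ} {u : Fin d → β → ℝ} {s : Fin d → ℝ}
    (h : ∀ t, HasSum (u t) (s t)) :
    HasSum (fun l : Fin d → β => ∏ t, u t (l t)) (∏ t, s t) := by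
  induction d with
  | zero => simp
  | succ d ih =>
    have ih : HasSum (fun l : Fin d → β => ∏ t : Fin d, u t.succ (l t)) (∏ t : Fin d, s t.succ) :=
      ih fun t => h t.succ
    have hsummable := summable_mul_of_summable_norm (h 0).summable.norm ih.summable.norm
    rw [← (Fin.consEquiv fun _ => β).hasSum_iff, Fin.prod_univ_succ]
    simpa only [Function.comp_def, Fin.consEquiv_apply, Fin.prod_univ_succ, Fin.cons_zero,
      Fin.cons_succ] using (h 0).mul ih hsummable

lemma integral_exp_two_pi_mul_I_eq_sinc (r : ℝ) :
    ∫ t in (-(1/2) : ℝ)..1/2, cexp (2 * π * r * t * I) = sinc (π * r) := by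
  rw [sinc_eq_real_sinc]
  rcases eq_or_ne r 0 with rfl | hr
  · norm_num
  have hc : 2 * π * r ≠ 0 := by positivity
  have hsubst := intervalIntegral.integral_comp_mul_left (fun s : ℝ => cexp (s * I)) hc
    (a := -(1/2)) (b := 1/2)
  simp only [ofReal_mul, ofReal_ofNat] at hsubst
  rw [hsubst, show 2 * π * r * (-(1/2)) = -(π * r) by ring, show 2 * π * r * (1/2) = π * r by ring,
    integral_exp_mul_I_eq_sinc, Complex.real_smul]
  have : (r : ℂ) ≠ 0 := ofReal_ne_zero.mpr hr
  push_cast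
  field_simp

def expCircle (x : ℝ) : AddCircle (1 : ℝ) → ℂ :=
  AddCircle.liftIoc 1 (-(1/2)) fun t => cexp (2 * π * x * t * I)

lemma memLp_expCircle (x : ℝ) : MemLp (expCircle x) 2 AddCircle.haarAddCircle := by
  have hcont : Continuous fun t : ℝ => cexp (2 * π * x * t * I) := by fun_prop
  refine (MemLp.of_bound hcont.aestronglyMeasurable 1 (.of_forall fun t => ?_)).memLp_liftIoc
    |>.haarAddCircle
  simp [norm_exp]

lemma fourierCoeff_expCircle (x : ℝ) (n : ℤ) :
    fourierCoeff (expCircle x) n = sinc (π * (x - n)) := by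
  rw [expCircle, fourierCoeff_liftIoc_eq, fourierCoeffOn_eq_integral]
  norm_num [fourier_coe_apply]
  rw [← integral_exp_two_pi_mul_I_eq_sinc]
  refine intervalIntegral.integral_congr fun t _ => ?_
  rw [← exp_conj, ← exp_add]
  simp only [map_mul, conj_I, conj_ofReal, map_ofNat, map_intCast]
  push_cast
  ring_nf

lemma conj_expCircle_mul (x y : ℝ) (q : AddCircle (1 : ℝ)) :
    conj (expCircle x q) * expCircle y q = expCircle (y - x) q := by
  simp only [expCircle, AddCircle.liftIoc, Function.comp_apply, Set.domRestrict_apply,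
    ← exp_conj, ← exp_add]
  congr 1
  simp only [map_mul, conj_I, conj_ofReal, map_ofNat]
  push_cast
  ring

lemma fourierBasis_repr_expCircle (x : ℝ) (n : ℤ) :
    fourierBasis.repr (memLp_expCircle x).toLp n = sinc (π * (x - n)) := by
  rw [fourierBasis_repr, fourierCoeff_congr_ae (memLp_expCircle x).coeFn_toLp,
    fourierCoeff_expCircle]

lemma inner_toLp_expCircle (x y : ℝ) :
    inner ℂ (memLp_expCircle x).toLp (memLp_expCircle y).toLp = (sinc (π * (y - x)) : ℂ) := by
  have h := fourierCoeff_expCircle (y - x) 0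
  simp only [fourierCoeff, neg_zero, fourier_zero, one_smul, Int.cast_zero, sub_zero] at h
  rw [L2.inner_def, ← h]
  refine integral_congr_ae ?_
  filter_upwards [(memLp_expCircle x).coeFn_toLp, (memLp_expCircle y).coeFn_toLp] with q hx hy
  rw [RCLike.inner_apply', hx, hy, conj_expCircle_mul]

lemma inner_toLp_expCircle_fourierBasis (x : ℝ) (n : ℤ) :
    inner ℂ (memLp_expCircle x).toLp (fourierBasis n) = (sinc (π * (x - n)) : ℂ) := by
  rw [← inner_conj_symm, ← fourierBasis.repr_apply_apply, fourierBasis_repr_expCircle, conj_ofReal]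

theorem hasSum_sinc_mul_sinc (x y : ℝ) :
    HasSum (fun n : ℤ => sinc (π * (x - n)) * sinc (π * (y - n))) (sinc (π * (x - y))) := by
  have h := fourierBasis.hasSum_inner_mul_inner (memLp_expCircle y).toLp (memLp_expCircle x).toLp
  simp only [inner_toLp_expCircle_fourierBasis, ← fourierBasis.repr_apply_apply,
    fourierBasis_repr_expCircle, inner_toLp_expCircle] at h
  refine hasSum_ofReal.mp ?_
  push_cast
  simpa only [mul_comm] using h

theorem sinc_series_identity_general
    (d : ℕ) (M : ℝ) (hM : 0 < M)
    (a b : Fin d → ℝ)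
    (y : (Fin d → ℤ) → Fin d → ℝ) (hy : ∀ l t, y l t = (l t : ℝ) / M) :
    (Summable fun l : Fin d → ℤ =>
      |dsinc (fun t => M * π * (a t - y l t)) * dsinc (fun t => M * π * (b t - y l t))|) ∧
    (∑' l : Fin d → ℤ,
      dsinc (fun t => M * π * (a t - y l t)) * dsinc (fun t => M * π * (b t - y l t))) =
      dsinc (fun t => M * π * (a t - b t)) := by
  have hsum : HasSum
      (fun l : Fin d → ℤ =>
        dsinc (fun t => M * π * (a t - y l t)) * dsinc (fun t => M * π * (b t - y l t)))
      (dsinc fun t => M * π * (a t - b t)) := by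
    have rescale : ∀ (c : ℝ) (n : ℤ), M * π * (c - n / M) = π * (M * c - n) := fun c n => by
      field_simp
    simp only [dsinc, hy, rescale, ← Finset.prod_mul_distrib]
    convert hasSum_pi_prod fun t => hasSum_sinc_mul_sinc (M * a t) (M * b t) using 3 with t
    ring_nf
  exact ⟨hsum.summable.abs, hsum.tsum_eq⟩

/-- the series `∑_{ℓ∈ℤ^d} sinc(Mπ(a - y_ℓ)) sinc(Mπ(b - y_ℓ))`
over the equispaced points `y_ℓ = ℓ/M` converges absolutely and equals
`sinc(Mπ(a - b))`. -/
theorem sinc_series_identity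
    (d : ℕ) (hd : 1 ≤ d) (M : ℝ) (hM : 0 < M)
    (a b : Fin d → ℝ)
    (y : (Fin d → ℤ) → Fin d → ℝ) (hy : ∀ l t, y l t = (l t : ℝ) / M) :
    (Summable fun l : Fin d → ℤ =>
      |dsinc (fun t => M * π * (a t - y l t)) * dsinc (fun t => M * π * (b t - y l t))|) ∧
    (∑' l : Fin d → ℤ,
      dsinc (fun t => M * π * (a t - y l t)) * dsinc (fun t => M * π * (b t - y l t))) =
      dsinc (fun t => M * π * (a t - b t)) :=
  sinc_series_identity_general d M hM a b y hy
end
end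

section
/- Let d, N ∈ ℕ with d ≥ 1, let M be a positive even integer, and let x_1, …, x_N ∈ ℝ^d. Let C_n := (sinc(Mπ(x_j − x_s)))_{j,s=1}^N be the nonequispaced sinc matrix. Then the diagonal matrix W = diag(w_1,…,w_N) with entries w_j := ( M^d · ∑_{s=1}^N sinc²(Mπ(x_j − x_s)) )^{−1} (well-defined, since the s = j term equals 1) minimizes the squared Frobenius norm ‖ M^d · C_n W − I_N ‖_F² over all diagonal matrices W ∈ ℂ^{N×N}, where sinc² of a vector means the square of the product of the one-dimensional sinc functions of its components. -/
/-!
The squared Frobenius norm of `A * diagonal v - 1` splits into columns, and column `s` only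
involves `v s`: it is the least-squares problem of approximating the unit vector `e_s` by a
multiple `z • c_s` of the `s`-th column of `A`. Its solution is the orthogonal projection of
`e_s` onto the line through `c_s`, i.e. `z = conj (A s s) / ‖c_s‖²`. For `A = M^d C_n`, which is
real, symmetric and has diagonal `M^d`, this is the weight `w_s`.
-/

noncomputable section
open scoped Real BigOperators
open Complex Matrix

theorem norm_sub_inner_div_smul_le {𝕜 E : Type*} [RCLike 𝕜] [NormedAddCommGroup E]
    [InnerProductSpace 𝕜 E] (v w : E) (z : 𝕜) :
    ‖w - (inner 𝕜 v w / ((‖v‖ ^ 2 : ℝ) : 𝕜)) • v‖ ≤ ‖w - z • v‖ := by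
  rw [← Submodule.starProjection_singleton, Submodule.starProjection_minimal]
  exact ciInf_le (f := fun y : 𝕜 ∙ v => ‖w - y‖)
    ⟨0, Set.forall_mem_range.mpr fun _ => norm_nonneg _⟩
    ⟨z • v, Submodule.smul_mem _ _ (Submodule.mem_span_singleton_self v)⟩

theorem sum_norm_sq_mul_sub_one_le {𝕜 ι : Type*} [RCLike 𝕜] [Fintype ι] [DecidableEq ι]
    (c : ι → 𝕜) (s : ι) (z : 𝕜) :
    ∑ j, ‖c j * (star (c s) / ((∑ i, ‖c i‖ ^ 2 : ℝ) : 𝕜)) - (1 : Matrix ι ι 𝕜) j s‖ ^ 2 ≤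
      ∑ j, ‖c j * z - (1 : Matrix ι ι 𝕜) j s‖ ^ 2 := by
  have hcol (y : 𝕜) : ∑ j, ‖c j * y - (1 : Matrix ι ι 𝕜) j s‖ ^ 2 =
      ‖EuclideanSpace.single s 1 - y • WithLp.toLp 2 c‖ ^ 2 := by
    rw [EuclideanSpace.norm_sq_eq]
    refine Finset.sum_congr rfl fun j _ => ?_
    rw [← norm_neg]
    simp [Matrix.one_apply, mul_comm, eq_comm]
  have hinner : inner 𝕜 (WithLp.toLp 2 c) (EuclideanSpace.single s (1 : 𝕜)) = star (c s) := by
    simp [EuclideanSpace.inner_single_right]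
  have hnorm : ‖WithLp.toLp 2 c‖ ^ 2 = ∑ i, ‖c i‖ ^ 2 := EuclideanSpace.norm_sq_eq _
  rw [hcol, hcol, ← hinner, ← hnorm]
  gcongr
  exact norm_sub_inner_div_smul_le _ _ _

theorem sum_sum_norm_sq_mul_diagonal_sub_one_le {𝕜 ι : Type*} [RCLike 𝕜] [Fintype ι]
    [DecidableEq ι] (A : Matrix ι ι 𝕜) (w : ι → 𝕜)
    (hw : ∀ s, w s = star (A s s) / ((∑ i, ‖A i s‖ ^ 2 : ℝ) : 𝕜)) (v : ι → 𝕜) :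
    ∑ j, ∑ s, ‖(A * diagonal w - 1) j s‖ ^ 2 ≤ ∑ j, ∑ s, ‖(A * diagonal v - 1) j s‖ ^ 2 := by
  simp only [Matrix.sub_apply, mul_diagonal]
  rw [Finset.sum_comm,
    Finset.sum_comm (f := fun j s => ‖A j s * v s - (1 : Matrix ι ι 𝕜) j s‖ ^ 2)]
  exact Finset.sum_le_sum fun s _ => hw s ▸ sum_norm_sq_mul_sub_one_le (fun j => A j s) s (v s)

theorem sinc_neg (x : ℝ) : sinc (-x) = sinc x := by
  unfold sinc
  split_ifs <;> simp_all [neg_div_neg_eq]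

theorem dsinc_neg {d : ℕ} (x : Fin d → ℝ) : dsinc (-x) = dsinc x :=
  Finset.prod_congr rfl fun t _ => sinc_neg (x t)

theorem dsinc_zero {d : ℕ} : dsinc (0 : Fin d → ℝ) = 1 := by
  simp [dsinc, sinc]

theorem dsinc_mul_sub_comm {d : ℕ} (K : ℝ) (y z : Fin d → ℝ) :
    dsinc (fun t => K * (y t - z t)) = dsinc (fun t => K * (z t - y t)) := by
  rw [← dsinc_neg]
  congr 1
  ext t
  simp only [Pi.neg_apply]
  ring

theorem sinc_weights_minimize_frobenius_general
    (d N M : ℕ)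
    (x : Fin N → Fin d → ℝ)
    (Cn : Matrix (Fin N) (Fin N) ℂ)
    (hCn : ∀ j s, Cn j s = ((dsinc fun t => (M : ℝ) * π * (x j t - x s t)) : ℂ))
    (w : Fin N → ℂ)
    (hw : ∀ j, w j =
      ((((M : ℝ) ^ d * ∑ s, (dsinc fun t => (M : ℝ) * π * (x j t - x s t)) ^ 2)⁻¹ : ℝ) : ℂ)) :
    ∀ v : Fin N → ℂ,
      (∑ j, ∑ s, ‖(((M : ℂ) ^ d) • (Cn * Matrix.diagonal w) - 1) j s‖ ^ 2) ≤
        ∑ j, ∑ s, ‖(((M : ℂ) ^ d) • (Cn * Matrix.diagonal v) - 1) j s‖ ^ 2 := by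
  intro v
  set a : Fin N → Fin N → ℝ := fun j s => dsinc fun t => (M : ℝ) * π * (x j t - x s t) with ha
  have a_symm (j s : Fin N) : a j s = a s j := dsinc_mul_sub_comm _ _ _
  have a_self (s : Fin N) : a s s = 1 := by
    simp only [ha, sub_self, mul_zero]
    exact dsinc_zero
  have hA (j s : Fin N) : ((M : ℂ) ^ d • Cn) j s = (((M : ℝ) ^ d * a j s : ℝ) : ℂ) := by
    simp [hCn, ha]
  rw [← Matrix.smul_mul, ← Matrix.smul_mul]
  refine sum_sum_norm_sq_mul_diagonal_sub_one_le _ w (fun s => ?_) v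
  have hws : w s = ((((M : ℝ) ^ d * ∑ i, a i s ^ 2)⁻¹ : ℝ) : ℂ) := by
    rw [hw s]
    simp_rw [a_symm _ s]
    rfl
  have hnorm : ∑ i, ‖((M : ℂ) ^ d • Cn) i s‖ ^ 2 = ((M : ℝ) ^ d) ^ 2 * ∑ i, a i s ^ 2 := by
    simp only [hA, Complex.norm_real, Real.norm_eq_abs, sq_abs, mul_pow, Finset.mul_sum]
  have hweight : ((M : ℝ) ^ d * ∑ i, a i s ^ 2)⁻¹ =
      (M : ℝ) ^ d / (((M : ℝ) ^ d) ^ 2 * ∑ i, a i s ^ 2) := by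
    grind
  rw [hws, hA, a_self, mul_one, hnorm, hweight, Complex.star_def, Complex.conj_ofReal]
  exact RCLike.ofReal_div _ _

/-- the weights `w_j = (M^d ∑_s sinc²(Mπ(x_j - x_s)))⁻¹` minimize
the squared Frobenius norm `‖M^d · C_n W - I_N‖_F²` over all diagonal matrices
`W ∈ ℂ^{N×N}`, where `C_n` is the nonequispaced sinc matrix. -/
theorem sinc_weights_minimize_frobenius
    (d N M : ℕ) (hd : 1 ≤ d) (hM : 0 < M) (hMeven : Even M)
    (x : Fin N → Fin d → ℝ)
    (Cn : Matrix (Fin N) (Fin N) ℂ)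
    (hCn : ∀ j s, Cn j s = ((dsinc fun t => (M : ℝ) * π * (x j t - x s t)) : ℂ))
    (w : Fin N → ℂ)
    (hw : ∀ j, w j =
      ((((M : ℝ) ^ d * ∑ s, (dsinc fun t => (M : ℝ) * π * (x j t - x s t)) ^ 2)⁻¹ : ℝ) : ℂ)) :
    ∀ v : Fin N → ℂ,
      (∑ j, ∑ s, ‖(((M : ℂ) ^ d) • (Cn * Matrix.diagonal w) - 1) j s‖ ^ 2) ≤
        ∑ j, ∑ s, ‖(((M : ℂ) ^ d) • (Cn * Matrix.diagonal v) - 1) j s‖ ^ 2 :=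
  sinc_weights_minimize_frobenius_general d N M x Cn hCn w hw
end
end

section
/- Let d, N ∈ ℕ with d ≥ 1, let M be a positive even integer, and let x_1, …, x_N ∈ [0,1)^d. Let A := (e^{2πi k·x_j})_{j=1,…,N; k∈I_M} ∈ ℂ^{N×M^d} be the nonequispaced Fourier matrix, define the matrix S ∈ ℝ^{N×N} by S_{j,s} := |[A A*]_{j,s}|² = |∑_{k∈I_M} e^{2πi k·(x_j − x_s)}|², and let b := M^d · (1, …, 1)^T ∈ ℝ^N. Then a vector w ∈ ℂ^N minimizes the squared Frobenius norm F(w) := ‖ A* diag(w) A − I_{M^d} ‖_F² over all w ∈ ℂ^N if and only if S w = b. Moreover, F(w) = w* S w − 2 Re(w* b) + M^d for all w ∈ ℂ^N. -/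
noncomputable section
open scoped Real BigOperators
open Complex Matrix

/-- The multi-index set `I_M := {k ∈ ℤ^d : -M/2 ≤ k_t < M/2 for all t}`. -/
def indexSet (d M : ℕ) : Finset (Fin d → ℤ) :=
  Finset.Icc (fun _ => -(M : ℤ) / 2) (fun _ => (M : ℤ) / 2 - 1)

/-!
`F(w)` is the squared Frobenius distance from the identity to `Aᴴ diag(w) A`, which is linear
in `w`; so `F` is a real quadratic function of `w`. By cyclicity of the trace its quadratic part
has Gram matrix `(A Aᴴ) ⊙ (A Aᴴ)ᵀ`, whose entries are `|[A Aᴴ]_{j,s}|² = S_{j,s}`, and its linear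
part is `Re tr(Aᴴ diag(w) A) = M^d Re ∑ w_j`, because the entries of `A` have modulus one.
By the Schur product theorem `S` is positive semidefinite, and a positive semidefinite
quadratic is minimal exactly where its gradient `S w - b` vanishes.
-/

open scoped ComplexOrder

theorem nonpos_of_forall_pos_mul_le_sq {a b : ℝ} (h : ∀ t : ℝ, 0 < t → t * b ≤ t ^ 2 * a) :
    b ≤ 0 := by
  by_contra! hb
  set t := b / (|a| + 1)
  have ht : 0 < t := by positivity
  have hta : t * a < b := by
    calc t * a ≤ t * |a| := by gcongr; exact le_abs_self a
      _ < t * (|a| + 1) := by gcongr; linarith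
      _ = b := div_mul_cancel₀ b (by positivity)
  nlinarith [h t ht]

namespace Matrix

variable {ι m n 𝕜 : Type*} [RCLike 𝕜]

section Quadratic

variable [Fintype ι]

theorem IsHermitian.re_star_dotProduct_mulVec_add {S : Matrix ι ι 𝕜} (hS : S.IsHermitian)
    (w h : ι → 𝕜) :
    RCLike.re (star (w + h) ⬝ᵥ S *ᵥ (w + h)) = RCLike.re (star w ⬝ᵥ S *ᵥ w)
      + RCLike.re (star h ⬝ᵥ S *ᵥ h) + 2 * RCLike.re (star h ⬝ᵥ S *ᵥ w) := by
  have hcross : star w ⬝ᵥ S *ᵥ h = star (star h ⬝ᵥ S *ᵥ w) := by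
    rw [star_dotProduct h, star_star, star_mulVec, ← dotProduct_mulVec, hS.eq]
  simp only [star_add, mulVec_add, add_dotProduct, dotProduct_add, hcross, map_add,
    RCLike.star_def, RCLike.conj_re]
  ring

theorem PosSemidef.forall_le_iff_mulVec_eq {S : Matrix ι ι 𝕜} (hS : S.PosSemidef) (b : ι → 𝕜)
    (c : ℝ) {F : (ι → 𝕜) → ℝ}
    (hF : ∀ v, F v = RCLike.re (star v ⬝ᵥ S *ᵥ v) - 2 * RCLike.re (star v ⬝ᵥ b) + c)
    (w : ι → 𝕜) :
    (∀ v, F w ≤ F v) ↔ S *ᵥ w = b := by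
  have hF_add : ∀ h, F (w + h) = F w + RCLike.re (star h ⬝ᵥ S *ᵥ h)
      + 2 * RCLike.re (star h ⬝ᵥ (S *ᵥ w - b)) := by
    intro h
    rw [hF, hF, hS.isHermitian.re_star_dotProduct_mulVec_add]
    simp only [star_add, add_dotProduct, dotProduct_sub, map_add, map_sub]
    ring
  constructor
  · intro hmin
    by_contra hne
    set r := S *ᵥ w - b
    have hr : 0 < RCLike.re (star r ⬝ᵥ r) :=
      (RCLike.pos_iff.mp (dotProduct_star_self_pos_iff.mpr (sub_ne_zero.mpr hne))).1
    -- a small step from `w` against the gradient `r` would decrease `F`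
    have hdescent : 2 * RCLike.re (star r ⬝ᵥ r) ≤ 0 := by
      refine nonpos_of_forall_pos_mul_le_sq (a := RCLike.re (star r ⬝ᵥ S *ᵥ r)) fun t ht => ?_
      have hstep := hF_add ((-t) • r) ▸ hmin (w + (-t) • r)
      simp only [star_smul, star_trivial, mulVec_smul, smul_dotProduct, dotProduct_smul,
        RCLike.smul_re] at hstep
      nlinarith
    linarith
  · intro hsol v
    have hpos := RCLike.nonneg_iff.mp (hS.dotProduct_mulVec_nonneg (v - w))
    rw [← add_sub_cancel w v, hF_add, hsol, sub_self, dotProduct_zero, map_zero]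
    linarith [hpos.1]

end Quadratic

theorem IsHermitian.hadamard_transpose_eq_map_norm_sq {P : Matrix n n 𝕜} (hP : P.IsHermitian) :
    P ⊙ Pᵀ = P.map fun z => ((‖z‖ ^ 2 : ℝ) : 𝕜) := by
  ext i j
  rw [hadamard_apply, transpose_apply, ← hP.apply j i, map_apply, RCLike.star_def,
    RCLike.mul_conj, RCLike.ofReal_pow]

theorem diag_mul_conjTranspose_of_forall_norm_eq_one [Fintype m] {A : Matrix n m 𝕜}
    (hA : ∀ i j, ‖A i j‖ = 1) : (A * Aᴴ).diag = fun _ => (Fintype.card m : 𝕜) := by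
  funext i
  simp [mul_apply, RCLike.mul_conj, hA]

section Frobenius

variable [Fintype m] [Fintype n]

theorem sum_norm_sq_eq_re_trace_conjTranspose_mul_self (Y : Matrix m n 𝕜) :
    ∑ i, ∑ j, ‖Y i j‖ ^ 2 = RCLike.re (Yᴴ * Y).trace := by
  simp only [trace, diag_apply, mul_apply, conjTranspose_apply, RCLike.star_def,
    RCLike.conj_mul, map_sum]
  rw [Finset.sum_comm]
  simp only [← RCLike.ofReal_pow, RCLike.ofReal_re]

theorem sum_norm_sq_sub_one [DecidableEq m] (X : Matrix m m 𝕜) :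
    ∑ i, ∑ j, ‖(X - 1) i j‖ ^ 2
      = RCLike.re (Xᴴ * X).trace - 2 * RCLike.re X.trace + Fintype.card m := by
  simp only [sum_norm_sq_eq_re_trace_conjTranspose_mul_self, conjTranspose_sub,
    conjTranspose_one, sub_mul, mul_sub, one_mul, mul_one, trace_sub, trace_one,
    trace_conjTranspose, map_sub, RCLike.star_def, RCLike.conj_re, RCLike.natCast_re]
  ring

variable [DecidableEq n] (A : Matrix n m 𝕜) (w : n → 𝕜)

theorem trace_conjTranspose_mul_diagonal_mul :
    (Aᴴ * diagonal w * A).trace = w ⬝ᵥ (A * Aᴴ).diag := by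
  rw [trace_mul_comm, ← Matrix.mul_assoc]
  simp only [trace, diag_apply, mul_diagonal, dotProduct, mul_comm]

theorem trace_conjTranspose_mul_self_conjTranspose_mul_diagonal_mul :
    ((Aᴴ * diagonal w * A)ᴴ * (Aᴴ * diagonal w * A)).trace
      = star w ⬝ᵥ ((A * Aᴴ) ⊙ (A * Aᴴ)ᵀ) *ᵥ w := by
  rw [dotProduct_mulVec, dotProduct_vecMul_hadamard, transpose_mul, transpose_transpose,
    diagonal_transpose, conjTranspose_mul, conjTranspose_mul, conjTranspose_conjTranspose,
    diagonal_conjTranspose]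
  simp only [Matrix.mul_assoc]
  rw [trace_mul_comm Aᴴ]
  simp only [Matrix.mul_assoc]

theorem sum_norm_sq_conjTranspose_mul_diagonal_mul_sub_one [DecidableEq m] :
    ∑ k, ∑ l, ‖(Aᴴ * diagonal w * A - 1 : Matrix m m 𝕜) k l‖ ^ 2
      = RCLike.re (star w ⬝ᵥ ((A * Aᴴ) ⊙ (A * Aᴴ)ᵀ) *ᵥ w)
        - 2 * RCLike.re (star w ⬝ᵥ (A * Aᴴ).diag) + Fintype.card m := by
  have hdiag : star (A * Aᴴ).diag = (A * Aᴴ).diag :=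
    funext fun i => (isHermitian_mul_conjTranspose_self A).apply i i
  have hlin : star w ⬝ᵥ (A * Aᴴ).diag = star (w ⬝ᵥ (A * Aᴴ).diag) := by
    conv_lhs => rw [← hdiag, star_dotProduct_star, dotProduct_comm]
  rw [sum_norm_sq_sub_one, trace_conjTranspose_mul_self_conjTranspose_mul_diagonal_mul,
    trace_conjTranspose_mul_diagonal_mul, hlin, RCLike.star_def, RCLike.conj_re]

end Frobenius

end Matrix

theorem card_indexSet {d M : ℕ} (hM : Even M) : (indexSet d M).card = M ^ d := by
  obtain ⟨r, rfl⟩ := hM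
  rw [indexSet, Pi.card_Icc, Finset.prod_const, Finset.card_univ, Fintype.card_fin,
    Int.card_Icc]
  congr 1
  omega

theorem frobenius_minimizer_iff_Sw_eq_b_general
    (d N M : ℕ) (hMeven : Even M)
    (x : Fin N → Fin d → ℝ)
    (A : Matrix (Fin N) ↥(indexSet d M) ℂ)
    (hA : ∀ (j : Fin N) (k : ↥(indexSet d M)),
      A j k = Complex.exp (2 * π * I * ∑ t, ((k : Fin d → ℤ) t : ℂ) * (x j t : ℂ)))
    (S : Matrix (Fin N) (Fin N) ℝ)
    (hS : ∀ j s, S j s = ‖(A * Aᴴ) j s‖ ^ 2)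
    (F : (Fin N → ℂ) → ℝ)
    (hF : ∀ w, F w = ∑ k : ↥(indexSet d M), ∑ l : ↥(indexSet d M),
      ‖(Aᴴ * Matrix.diagonal w * A - (1 : Matrix ↥(indexSet d M) ↥(indexSet d M) ℂ)) k l‖ ^ 2) :
    (∀ w : Fin N → ℂ,
      ((∀ v : Fin N → ℂ, F w ≤ F v) ↔
        ∀ j, ∑ s, (S j s : ℂ) * w s = (M : ℂ) ^ d)) ∧
    (∀ w : Fin N → ℂ,
      F w = (∑ j, ∑ s, starRingEnd ℂ (w j) * (S j s : ℂ) * w s).re -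
        2 * (∑ j, starRingEnd ℂ (w j) * ((M : ℂ) ^ d)).re + (M : ℝ) ^ d) := by
  have hA_norm : ∀ j k, ‖A j k‖ = 1 := fun j k => by
    rw [hA, ← norm_exp_ofReal_mul_I (2 * π * ∑ t, ((k : Fin d → ℤ) t : ℝ) * x j t)]
    push_cast
    ring_nf
  have hSA : S.map ((↑) : ℝ → ℂ) = (A * Aᴴ) ⊙ (A * Aᴴ)ᵀ := by
    rw [(isHermitian_mul_conjTranspose_self A).hadamard_transpose_eq_map_norm_sq]
    ext j s
    simp [hS]
  have hdiag : (A * Aᴴ).diag = fun _ => (M : ℂ) ^ d := by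
    rw [diag_mul_conjTranspose_of_forall_norm_eq_one hA_norm, Fintype.card_coe,
      card_indexSet hMeven, Nat.cast_pow]
  have hF_quad : ∀ w, F w = RCLike.re (star w ⬝ᵥ S.map ((↑) : ℝ → ℂ) *ᵥ w)
      - 2 * RCLike.re (star w ⬝ᵥ fun _ => (M : ℂ) ^ d) + (M : ℝ) ^ d := fun w => by
    rw [hF, sum_norm_sq_conjTranspose_mul_diagonal_mul_sub_one, hSA, hdiag, Fintype.card_coe,
      card_indexSet hMeven, Nat.cast_pow]
  have hS_psd : (S.map ((↑) : ℝ → ℂ)).PosSemidef := hSA ▸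
    (posSemidef_self_mul_conjTranspose A).hadamard (posSemidef_self_mul_conjTranspose A).transpose
  refine ⟨fun w => ?_, fun w => ?_⟩
  · rw [hS_psd.forall_le_iff_mulVec_eq _ _ hF_quad, funext_iff]
    simp only [mulVec, dotProduct, map_apply]
  · rw [hF_quad]
    simp only [mulVec, dotProduct, map_apply, Pi.star_apply, RCLike.star_def, Finset.mul_sum,
      mul_assoc, RCLike.re_to_complex]

/-- `w` minimizes `F(w) = ‖A* diag(w) A - I‖_F²` iff `S w = b`
where `S_{j,s} = |[A A*]_{j,s}|²` and `b = M^d·(1,…,1)ᵀ`; moreover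
`F(w) = w* S w - 2 Re(w* b) + M^d`. -/
theorem frobenius_minimizer_iff_Sw_eq_b
    (d N M : ℕ) (hd : 1 ≤ d) (hM : 0 < M) (hMeven : Even M)
    (x : Fin N → Fin d → ℝ) (hx : ∀ j t, x j t ∈ Set.Ico (0 : ℝ) 1)
    (A : Matrix (Fin N) ↥(indexSet d M) ℂ)
    (hA : ∀ (j : Fin N) (k : ↥(indexSet d M)),
      A j k = Complex.exp (2 * π * I * ∑ t, ((k : Fin d → ℤ) t : ℂ) * (x j t : ℂ)))
    (S : Matrix (Fin N) (Fin N) ℝ)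
    (hS : ∀ j s, S j s = ‖(A * Aᴴ) j s‖ ^ 2)
    (F : (Fin N → ℂ) → ℝ)
    (hF : ∀ w, F w = ∑ k : ↥(indexSet d M), ∑ l : ↥(indexSet d M),
      ‖(Aᴴ * Matrix.diagonal w * A - (1 : Matrix ↥(indexSet d M) ↥(indexSet d M) ℂ)) k l‖ ^ 2) :
    (∀ w : Fin N → ℂ,
      ((∀ v : Fin N → ℂ, F w ≤ F v) ↔
        ∀ j, ∑ s, (S j s : ℂ) * w s = (M : ℂ) ^ d)) ∧
    (∀ w : Fin N → ℂ,
      F w = (∑ j, ∑ s, starRingEnd ℂ (w j) * (S j s : ℂ) * w s).re -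
        2 * (∑ j, starRingEnd ℂ (w j) * ((M : ℂ) ^ d)).re + (M : ℝ) ^ d) :=
  frobenius_minimizer_iff_Sw_eq_b_general d N M hMeven x A hA S hS F hF
end
end
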